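/- Let Σ be a downward-closed family of subsets of {1,…,d} containing all singletons, with maximal elements Σ_max. For z ∈ ℂ^d, the sum Σ_{σ ∈ Σ_max} ∏_{i ∉ σ} |z_i|² vanishes if and only if {i : z_i = 0} contains a primitive collection of Σ, assuming every element of Σ is contained in some maximal element. -/

import Mathlib

/-!
A product `∏_{i ∉ σ} |z_i|²` vanishes iff some `z_i` with `i ∉ σ` is zero, so the whole sum
vanishes iff the zero set `Z` of `z` lies in no maximal face. Since every face lies in a maximal
one, this says `Z ∉ Σ`; and a finite set outside the lower set `Σ` is exactly a set containing a
minimal non-face, i.e. a primitive collection.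
-/

open Finset

variable {α : Type*}

def IsPrimitiveCollection (F : Set (Finset α)) (P : Finset α) : Prop :=
  P ∉ F ∧ ∀ Q ⊂ P, Q ∈ F

theorem isPrimitiveCollection_iff_minimal {F : Set (Finset α)} {P : Finset α} :
    IsPrimitiveCollection F P ↔ Minimal (· ∉ F) P := by
  simp [IsPrimitiveCollection, minimal_iff_forall_lt]

theorem exists_isPrimitiveCollection_subset_iff {F : Set (Finset α)} (hF : IsLowerSet F)
    (Z : Finset α) : (∃ P ⊆ Z, IsPrimitiveCollection F P) ↔ Z ∉ F := by
  simp_rw [isPrimitiveCollection_iff_minimal]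
  exact ⟨fun ⟨P, hPZ, hP⟩ hZ => hP.prop (hF hPZ hZ), exists_minimal_le_of_wellFoundedLT (· ∉ F) Z⟩

theorem IsLowerSet.mem_iff_exists_le_of_forall_le {β : Type*} [Preorder β] {F M : Set β}
    (hF : IsLowerSet F) (hMF : M ⊆ F) (hcov : ∀ a ∈ F, ∃ m ∈ M, a ≤ m) {a : β} :
    a ∈ F ↔ ∃ m ∈ M, a ≤ m :=
  ⟨hcov a, fun ⟨_, hm, ham⟩ => hF ham (hMF hm)⟩

theorem sum_prod_compl_norm_sq_eq_zero_iff [Fintype α] [DecidableEq α] {E : Type*}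
    [NormedAddCommGroup E] (S : Finset (Finset α)) (z : α → E) :
    ∑ σ ∈ S, ∏ i ∈ σᶜ, ‖z i‖ ^ 2 = 0 ↔ ∀ σ ∈ S, ∃ i ∉ σ, z i = 0 := by
  rw [sum_eq_zero_iff_of_nonneg fun _ _ => by positivity]
  simp [prod_eq_zero_iff]

theorem stmt12_general (d : ℕ) (F Fmax : Finset (Finset (Fin d)))
    (hdc : ∀ s ∈ F, ∀ t ⊆ s, t ∈ F)
    (hmax : Fmax ⊆ F) (hcov : ∀ s ∈ F, ∃ σ ∈ Fmax, s ⊆ σ)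
    (z : Fin d → ℂ) :
    ∑ σ ∈ Fmax, ∏ i ∈ σᶜ, ‖z i‖ ^ 2 = 0 ↔
      ∃ P : Finset (Fin d), (P ∉ F ∧ ∀ Q ⊂ P, Q ∈ F) ∧ ∀ i ∈ P, z i = 0 := by
  have hF : IsLowerSet (F : Set (Finset (Fin d))) := fun s t hts hs => hdc s hs t hts
  let Z := univ.filter (z · = 0)
  have hZ : Z ∈ (F : Set (Finset (Fin d))) ↔ ∃ σ ∈ (Fmax : Set (Finset (Fin d))), Z ≤ σ :=
    hF.mem_iff_exists_le_of_forall_le (by simpa using hmax) hcov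
  calc _ ↔ ∀ σ ∈ Fmax, ¬Z ⊆ σ := by
        simp [sum_prod_compl_norm_sq_eq_zero_iff, not_subset, Z, and_comm]
    _ ↔ Z ∉ (F : Set (Finset (Fin d))) := by simp [hZ]
    _ ↔ ∃ P ⊆ Z, IsPrimitiveCollection F P := (exists_isPrimitiveCollection_subset_iff hF Z).symm
    _ ↔ _ := by simp [Z, subset_iff, IsPrimitiveCollection, and_comm]

/-- For a downward-closed family `F` containing all singletons, with maximal
elements `Fmax` (every element of `F` contained in a maximal one), the sum
`Σ_{σ ∈ Fmax} ∏_{i ∉ σ} |z_i|²` vanishes iff the zero set of `z` contains a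
primitive collection of `F`. -/
theorem stmt12 (d : ℕ) (F Fmax : Finset (Finset (Fin d)))
    (hdc : ∀ s ∈ F, ∀ t ⊆ s, t ∈ F) (hsing : ∀ i : Fin d, {i} ∈ F)
    (hmax : Fmax ⊆ F) (hcov : ∀ s ∈ F, ∃ σ ∈ Fmax, s ⊆ σ)
    (z : Fin d → ℂ) :
    ∑ σ ∈ Fmax, ∏ i ∈ σᶜ, ‖z i‖ ^ 2 = 0 ↔
      ∃ P : Finset (Fin d), (P ∉ F ∧ ∀ Q ⊂ P, Q ∈ F) ∧ ∀ i ∈ P, z i = 0 :=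
  stmt12_general d F Fmax hdc hmax hcov z
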